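/- Let φ : ℝⁿ → ℝⁿ be a bijective, twice continuously differentiable map with twice continuously differentiable inverse and let G : ℝⁿ → ℝ^{n×n} be continuously differentiable. Define G̃(y) = J_φ(φ⁻¹(y)) G(φ⁻¹(y)). Then for every y, with x = φ⁻¹(y): ∇_y · ( G̃(y)ᵀ ) = ∇_x · ( G(x)ᵀ ) + G(x)ᵀ · ∇_y · ( J_φ(φ⁻¹(y))ᵀ ), where all matrix divergences are taken row-wise. -/

import Mathlib

open MeasureTheory

noncomputable section

/-- Jacobian matrix of a map `ℝⁿ → ℝⁿ`: `(jac f x) i j = ∂ f_i / ∂ x_j`. -/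
def jac {n : ℕ} (f : (Fin n → ℝ) → (Fin n → ℝ)) (x : Fin n → ℝ) :
    Matrix (Fin n) (Fin n) ℝ :=
  Matrix.of fun i j => fderiv ℝ f x (Pi.single j 1) i

/-- Partial derivative of a scalar function on `ℝⁿ` in the `j`-th coordinate direction. -/
def pderiv' {n : ℕ} (f : (Fin n → ℝ) → ℝ) (j : Fin n) (x : Fin n → ℝ) : ℝ :=
  fderiv ℝ f x (Pi.single j 1)

lemma clm_apply_eq_sum {n : ℕ} (L : (Fin n → ℝ) →L[ℝ] ℝ) (v : Fin n → ℝ) :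
    L v = ∑ j, v j * L (Pi.single j 1) := by
  conv_lhs => rw [← Finset.univ_sum_single v]
  rw [map_sum]
  refine Finset.sum_congr rfl fun j _ => ?_
  have : Pi.single j (v j) = v j • (Pi.single j (1:ℝ) : Fin n → ℝ) := by
    ext l
    rcases eq_or_ne l j with h | h <;> simp [h, Pi.single_apply]
  rw [this, _root_.map_smul, smul_eq_mul]


/-- **Divergence of the transposed transformed diffusion matrix.**
For a C² diffeomorphism `φ` (inverse `ψ`) and a C¹ matrix map `G`, with
`G̃(y) = J_φ(ψ y) G(ψ y)`, for every `y`, with `x = ψ y`: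
`∇_y·(G̃(y)ᵀ) = ∇_x·(G(x)ᵀ) + G(x)ᵀ ∇_y·(J_φ(ψ y)ᵀ)` (row-wise divergences). -/
theorem div_transposed_transformed_diffusion {n : ℕ}
    (φ ψ : (Fin n → ℝ) → (Fin n → ℝ))
    (hbij : Function.Bijective φ)
    (hφ : ContDiff ℝ 2 φ) (hψ : ContDiff ℝ 2 ψ)
    (hleft : Function.LeftInverse ψ φ) (hright : Function.RightInverse ψ φ)
    (G : (Fin n → ℝ) → Fin n → Fin n → ℝ)
    (hG : ∀ i j, ContDiff ℝ 1 fun x => G x i j)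
    (Gtil : (Fin n → ℝ) → Fin n → Fin n → ℝ)
    (hGtil : ∀ y i j, Gtil y i j = ∑ k, jac φ (ψ y) i k * G (ψ y) k j) :
    ∀ y i,
      (∑ j, pderiv' (fun z => Gtil z j i) j y)
        = (∑ j, pderiv' (fun x => G x j i) j (ψ y))
          + ∑ j, G (ψ y) j i *
              ∑ k, pderiv' (fun z => jac φ (ψ z) k j) k y := by
  intro y i
  have hψ1 : ContDiff ℝ 1 ψ := hψ.of_le one_le_two
  have hφ1 : ContDiff ℝ 1 φ := hφ.of_le one_le_two
  have hyx : φ (ψ y) = y := hright y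
  -- differentiability of the jacobian entries composed with ψ
  have hJac : ∀ j k : Fin n, ContDiff ℝ 1 (fun w => jac φ w j k) := by
    intro j k
    have h1 : ContDiff ℝ 1 (fderiv ℝ φ) := hφ.fderiv_right (le_refl 2)
    have h2 : ContDiff ℝ 1 (fun w => fderiv ℝ φ w (Pi.single k 1)) :=
      h1.clm_apply contDiff_const
    exact (contDiff_pi.1 h2) j
  have hA : ∀ j k : Fin n, Differentiable ℝ (fun z => jac φ (ψ z) j k) :=
    fun j k => ((hJac j k).comp hψ1).differentiable one_ne_zero
  have hB : ∀ k : Fin n, Differentiable ℝ (fun z => G (ψ z) k i) :=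
    fun k => ((hG k i).comp hψ1).differentiable one_ne_zero
  have hDψ : DifferentiableAt ℝ ψ y := hψ1.differentiable one_ne_zero y
  have hDφ : DifferentiableAt ℝ φ (ψ y) := hφ1.differentiable one_ne_zero (ψ y)
  -- inverse of jacobians
  have hinv : ∀ v, fderiv ℝ ψ y (fderiv ℝ φ (ψ y) v) = v := by
    intro v
    have hcomp : fderiv ℝ (ψ ∘ φ) (ψ y)
        = (fderiv ℝ ψ (φ (ψ y))).comp (fderiv ℝ φ (ψ y)) :=
      fderiv_comp (ψ y) (by rw [hyx]; exact hDψ) hDφ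
    have hid : ψ ∘ φ = id := funext hleft
    rw [hid, fderiv_id, hyx] at hcomp
    have := congrArg (fun L : (Fin n → ℝ) →L[ℝ] (Fin n → ℝ) => L v) hcomp
    simpa using this.symm
  -- chain rule for B
  have hBder : ∀ k : Fin n, fderiv ℝ (fun z => G (ψ z) k i) y
      = (fderiv ℝ (fun w => G w k i) (ψ y)).comp (fderiv ℝ ψ y) := fun k =>
    fderiv_comp y ((hG k i).differentiable one_ne_zero (ψ y)) hDψ
  calc
    (∑ j, pderiv' (fun z => Gtil z j i) j y)
        = ∑ j, ∑ k, (jac φ (ψ y) j k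
              * fderiv ℝ (fun z => G (ψ z) k i) y (Pi.single j 1)
            + G (ψ y) k i
              * fderiv ℝ (fun z => jac φ (ψ z) j k) y (Pi.single j 1)) := by
      refine Finset.sum_congr rfl fun j _ => ?_
      have hfun : (fun z => Gtil z j i)
          = fun z => ∑ k, jac φ (ψ z) j k * G (ψ z) k i :=
        funext fun z => hGtil z j i
      rw [pderiv', hfun,
        fderiv_fun_sum (A := fun k z => jac φ (ψ z) j k * G (ψ z) k i) fun k _ => ((hA j k) y).mul ((hB k) y),
        ContinuousLinearMap.sum_apply]
      refine Finset.sum_congr rfl fun k _ => ?_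
      rw [fderiv_fun_mul ((hA j k) y) ((hB k) y)]
      simp [mul_comm]
    _ = (∑ j, ∑ k, jac φ (ψ y) j k
            * fderiv ℝ (fun z => G (ψ z) k i) y (Pi.single j 1))
        + ∑ j, ∑ k, G (ψ y) k i
            * fderiv ℝ (fun z => jac φ (ψ z) j k) y (Pi.single j 1) := by
      rw [← Finset.sum_add_distrib]
      exact Finset.sum_congr rfl fun j _ => by rw [← Finset.sum_add_distrib]
    _ = (∑ j, pderiv' (fun x => G x j i) j (ψ y))
        + ∑ j, G (ψ y) j i * ∑ k, pderiv' (fun z => jac φ (ψ z) k j) k y := by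
      congr 1
      · -- first part: use chain rule and jacobian inverse
        rw [Finset.sum_comm]
        refine Finset.sum_congr rfl fun k _ => ?_
        have : ∀ j : Fin n, jac φ (ψ y) j k
            * fderiv ℝ (fun z => G (ψ z) k i) y (Pi.single j 1)
            = (fderiv ℝ φ (ψ y) (Pi.single k 1)) j
              * ((fderiv ℝ (fun w => G w k i) (ψ y)).comp (fderiv ℝ ψ y))
                  (Pi.single j 1) := by
          intro j; rw [hBder k]; rfl
        rw [Finset.sum_congr rfl fun j _ => this j,
          ← clm_apply_eq_sum ((fderiv ℝ (fun w => G w k i) (ψ y)).comp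
              (fderiv ℝ ψ y)) (fderiv ℝ φ (ψ y) (Pi.single k 1))]
        show fderiv ℝ (fun w => G w k i) (ψ y)
            (fderiv ℝ ψ y (fderiv ℝ φ (ψ y) (Pi.single k 1))) = _
        rw [hinv]
        rfl
      · rw [Finset.sum_comm]
        exact Finset.sum_congr rfl fun j _ => by rw [Finset.mul_sum]; rfl
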